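/- Let n ≥ 2 be an integer, let U(n) denote the compact group of n×n complex unitary matrices with its Borel σ-algebra and normalized Haar probability measure μ. Define W = Σ_{j,k=1}^{n} E_{j,k} ⊗ E_{k,j} ∈ M_{n²}(ℂ), Π_0 = (1_{n²} + W)/2 and Π_1 = (1_{n²} − W)/2. Then for every X ∈ M_{n²}(ℂ) and all indices i, j, ∫_{U(n)} ((U⊗U) X (U⊗U)ᴴ)(i,j) dμ(U) = [ (2/(n(n+1)))·⟨Π_0, X⟩·Π_0 + (2/(n(n−1)))·⟨Π_1, X⟩·Π_1 ](i,j), where ⟨A,B⟩ = Tr(AᴴB). -/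

import Mathlib

/-!
Left invariance of the Haar measure makes the twirl `T X` commute with every `V ⊗ V`, and
since `(U ⊗ U)ᴴ (U ⊗ U) = 1` it preserves `tr (P X)` for every `P` that commutes with all
`U ⊗ U`. In the commutant, diagonal phase unitaries kill the entries `M (a, b) (c, d)` with
`{a, b} ≠ {c, d}`, permutation matrices make the surviving entries constant on the three
orbits `(a, a) (a, a)`, `(a, b) (a, b)`, `(a, b) (b, a)`, and a single Householder
reflection, which is not monomial, ties the first constant to the other two. Hence
`T X = β • 1 + γ • W = (β + γ) • Π₀ + (β - γ) • Π₁`, and both coefficients are read off from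
`tr (Πᵢ T X) = tr (Πᵢ X)` and `tr Π₀ = n (n + 1) / 2`, `tr Π₁ = n (n - 1) / 2`.
-/

open Matrix MeasureTheory Kronecker

section SwapMatrix

variable (ι R : Type*) [DecidableEq ι]

abbrev swapMatrix [Zero R] [One R] : Matrix (ι × ι) (ι × ι) R :=
  Equiv.Perm.permMatrix R (Equiv.prodComm ι ι)

variable {ι R}

lemma swapMatrix_apply [Zero R] [One R] (p q : ι × ι) :
    swapMatrix ι R p q = if q = p.swap then 1 else 0 := by
  simp [eq_comm]

@[simp]
lemma conjTranspose_swapMatrix [NonAssocSemiring R] [StarRing R] :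
    (swapMatrix ι R)ᴴ = swapMatrix ι R := by
  rw [conjTranspose_permMatrix]; rfl

variable [Fintype ι]

lemma sum_single_kronecker_single [Semiring R] :
    ∑ j : ι, ∑ k : ι, single j k (1 : R) ⊗ₖ single k j (1 : R) = swapMatrix ι R := by
  ext ⟨a, b⟩ ⟨c, d⟩
  simp only [Matrix.sum_apply, kroneckerMap_apply, single_apply, swapMatrix_apply,
    Prod.swap_prod_mk, Prod.mk.injEq]
  simp only [eq_comm, ite_and, mul_ite, mul_one, mul_zero, Finset.sum_ite_eq, Finset.mem_univ,
    ↓reduceIte]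
  split_ifs <;> rfl

lemma swapMatrix_mul_kronecker [CommSemiring R] (A B : Matrix ι ι R) :
    swapMatrix ι R * (A ⊗ₖ B) = (B ⊗ₖ A) * swapMatrix ι R := by
  rw [PEquiv.toMatrix_toPEquiv_mul, PEquiv.mul_toMatrix_toPEquiv]
  ext ⟨a, b⟩ ⟨c, d⟩
  simp [mul_comm]

lemma commute_kronecker_swapMatrix [CommSemiring R] (A : Matrix ι ι R) :
    Commute (A ⊗ₖ A) (swapMatrix ι R) :=
  (swapMatrix_mul_kronecker A A).symm

@[simp]
lemma swapMatrix_mul_self [NonAssocSemiring R] : swapMatrix ι R * swapMatrix ι R = 1 := by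
  rw [← permMatrix_mul]; convert permMatrix_one; ext <;> rfl

lemma trace_swapMatrix [AddCommMonoidWithOne R] :
    (swapMatrix ι R).trace = Fintype.card ι := by
  simp only [trace, diag, swapMatrix_apply, Fintype.sum_prod_type, Prod.swap_prod_mk,
    Prod.mk.injEq]
  simp [eq_comm]

end SwapMatrix

section Projections

variable (ι : Type*) [DecidableEq ι]

noncomputable def symmProj : Matrix (ι × ι) (ι × ι) ℂ := ((1 : ℂ) / 2) • (1 + swapMatrix ι ℂ)

noncomputable def antisymmProj : Matrix (ι × ι) (ι × ι) ℂ := ((1 : ℂ) / 2) • (1 - swapMatrix ι ℂ)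

variable {ι}

@[simp]
lemma conjTranspose_symmProj : (symmProj ι)ᴴ = symmProj ι := by
  simp only [symmProj, conjTranspose_smul, conjTranspose_add, conjTranspose_one,
    conjTranspose_swapMatrix]
  norm_num

@[simp]
lemma conjTranspose_antisymmProj : (antisymmProj ι)ᴴ = antisymmProj ι := by
  simp only [antisymmProj, conjTranspose_smul, conjTranspose_sub, conjTranspose_one,
    conjTranspose_swapMatrix]
  norm_num

lemma smul_one_add_smul_swapMatrix_eq (β γ : ℂ) :
    β • 1 + γ • swapMatrix ι ℂ = (β + γ) • symmProj ι + (β - γ) • antisymmProj ι := by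
  simp only [symmProj, antisymmProj]
  module

variable [Fintype ι]

lemma commute_kronecker_symmProj (A : Matrix ι ι ℂ) : Commute (A ⊗ₖ A) (symmProj ι) :=
  ((Commute.one_right _).add_right (commute_kronecker_swapMatrix A)).smul_right _

lemma commute_kronecker_antisymmProj (A : Matrix ι ι ℂ) : Commute (A ⊗ₖ A) (antisymmProj ι) :=
  ((Commute.one_right _).sub_right (commute_kronecker_swapMatrix A)).smul_right _

lemma symmProj_mul_smul_one_add_smul_swapMatrix (β γ : ℂ) :
    symmProj ι * (β • 1 + γ • swapMatrix ι ℂ) = (β + γ) • symmProj ι := by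
  simp only [symmProj, Matrix.mul_add, Matrix.add_mul, mul_smul_comm, smul_mul_assoc,
    Matrix.mul_one, Matrix.one_mul, swapMatrix_mul_self]
  module

lemma antisymmProj_mul_smul_one_add_smul_swapMatrix (β γ : ℂ) :
    antisymmProj ι * (β • 1 + γ • swapMatrix ι ℂ) = (β - γ) • antisymmProj ι := by
  simp only [antisymmProj, Matrix.mul_add, Matrix.sub_mul, mul_smul_comm, smul_mul_assoc,
    Matrix.mul_one, Matrix.one_mul, swapMatrix_mul_self]
  module

lemma trace_symmProj :
    trace (symmProj ι) = Fintype.card ι * (Fintype.card ι + 1) / 2 := by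
  simp only [symmProj, trace_smul, trace_add, trace_one, trace_swapMatrix, Fintype.card_prod]
  push_cast
  ring

lemma trace_antisymmProj :
    trace (antisymmProj ι) = Fintype.card ι * (Fintype.card ι - 1) / 2 := by
  simp only [antisymmProj, trace_smul, trace_sub, trace_one, trace_swapMatrix, Fintype.card_prod]
  push_cast
  ring

lemma eq_trace_mul_symmProj_smul_add_trace_mul_antisymmProj_smul
    (hcard : 2 ≤ Fintype.card ι) {M : Matrix (ι × ι) (ι × ι) ℂ} {β γ : ℂ}
    (hM : M = β • 1 + γ • swapMatrix ι ℂ) :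
    M = (2 / (Fintype.card ι * (Fintype.card ι + 1)) * trace (symmProj ι * M)) • symmProj ι
      + (2 / (Fintype.card ι * (Fintype.card ι - 1)) * trace (antisymmProj ι * M)) •
        antisymmProj ι := by
  have hN : (Fintype.card ι : ℂ) ≠ 0 := by exact_mod_cast (by omega : Fintype.card ι ≠ 0)
  have hN1 : (Fintype.card ι : ℂ) + 1 ≠ 0 := by
    exact_mod_cast (by omega : Fintype.card ι + 1 ≠ 0)
  have hN2 : (Fintype.card ι : ℂ) - 1 ≠ 0 := by
    rw [sub_ne_zero]; exact_mod_cast (by omega : Fintype.card ι ≠ 1)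
  rw [hM, symmProj_mul_smul_one_add_smul_swapMatrix, antisymmProj_mul_smul_one_add_smul_swapMatrix,
    trace_smul, trace_smul, trace_symmProj, trace_antisymmProj, smul_eq_mul, smul_eq_mul,
    smul_one_add_smul_swapMatrix_eq]
  congr 2 <;> field_simp

end Projections

lemma permMatrix_kronecker_permMatrix {ι R : Type*} [DecidableEq ι] [MulZeroOneClass R]
    (σ τ : Equiv.Perm ι) :
    σ.permMatrix R ⊗ₖ τ.permMatrix R = Equiv.Perm.permMatrix R (σ.prodCongr τ) := by
  ext ⟨a, b⟩ ⟨c, d⟩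
  simp only [kroneckerMap_apply, PEquiv.toMatrix_apply, Equiv.toPEquiv_apply, Option.mem_def,
    Option.some.injEq, Equiv.prodCongr_apply, Prod.map_apply, Prod.mk.injEq, ite_and]
  split_ifs <;> simp

section UnitaryMatrices

variable {ι R : Type*} [Fintype ι] [DecidableEq ι] [CommRing R] [StarRing R]

lemma diagonal_mem_unitaryGroup {d : ι → R} (hd : ∀ i, star (d i) * d i = 1) :
    diagonal d ∈ unitaryGroup ι R := by
  rw [mem_unitaryGroup_iff', star_eq_conjTranspose, diagonal_conjTranspose,
    diagonal_mul_diagonal, ← diagonal_one]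
  exact congrArg diagonal (funext hd)

lemma permMatrix_mem_unitaryGroup (σ : Equiv.Perm ι) : σ.permMatrix R ∈ unitaryGroup ι R := by
  rw [mem_unitaryGroup_iff, star_eq_conjTranspose, conjTranspose_permMatrix, ← permMatrix_mul]
  simp

lemma householder_mem_unitaryGroup {v : ι → R} (hv : star v ⬝ᵥ v = 1) :
    1 - (2 : R) • vecMulVec v (star v) ∈ unitaryGroup ι R := by
  have hP : vecMulVec v (star v) * vecMulVec v (star v) = vecMulVec v (star v) := by
    rw [vecMulVec_mul_vecMulVec, hv, one_smul]
  rw [mem_unitaryGroup_iff, star_eq_conjTranspose, conjTranspose_sub, conjTranspose_smul,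
    conjTranspose_vecMulVec, star_star, conjTranspose_one]
  simp only [star_ofNat, sub_mul, mul_sub, smul_mul_smul, mul_smul, hP, one_mul, mul_one]
  module

lemma commute_of_mul_mul_conjTranspose_eq {U M : Matrix ι ι R} (hU : U ∈ unitaryGroup ι R)
    (h : U * M * Uᴴ = M) : Commute U M := by
  have hUU : Uᴴ * U = 1 := mem_unitaryGroup_iff'.mp hU
  calc U * M = U * M * Uᴴ * U := by rw [Matrix.mul_assoc _ Uᴴ, hUU, Matrix.mul_one]
    _ = M * U := by rw [h]

end UnitaryMatrices

section Commutant

variable {ι : Type*} [DecidableEq ι]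

lemma phase_mul_phase_eq_one_iff (t a b : ι) :
    (if a = t then Complex.I else 1) * (if b = t then Complex.I else 1) = 1 ↔ a ≠ t ∧ b ≠ t := by
  split_ifs <;> norm_num [*, Complex.ext_iff]

variable [Fintype ι]

-- `v = (3/5) eₐ + (4/5) e_b` is a unit vector with rational entries; the reflection has
-- `V a a = 7/25` and `V a b = -24/25`.
lemma exists_mem_unitaryGroup_apply_mul_apply_ne_zero {a b : ι} (hab : a ≠ b) :
    ∃ V ∈ unitaryGroup ι ℂ, V a a * V a b ≠ 0 := by
  set v : ι → ℂ := Pi.single a (3 / 5) + Pi.single b (4 / 5)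
  have hv : star v ⬝ᵥ v = 1 := by
    norm_num [v, dotProduct, Pi.single_apply, add_mul, mul_add, Finset.sum_add_distrib, hab,
      hab.symm, map_div₀, map_ofNat]
  refine ⟨_, householder_mem_unitaryGroup hv, ?_⟩
  norm_num [v, vecMulVec_apply, hab, hab.symm]

lemma eq_zero_of_commute_smul_diagonal {V : Matrix ι ι ℂ} {a b : ι} (hab : a ≠ b)
    (hV : V a a * V a b ≠ 0) {c : ℂ}
    (h : Commute (V ⊗ₖ V) (c • diagonal fun p : ι × ι => if p.1 = p.2 then 1 else 0)) :
    c = 0 := by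
  have := congrFun (congrFun h (a, a)) (a, b)
  simp only [mul_smul_comm, smul_mul_assoc, Matrix.smul_apply, mul_diagonal, diagonal_mul,
    kroneckerMap_apply, smul_eq_mul, if_neg hab] at this
  simpa [hV] using this

variable {M : Matrix (ι × ι) (ι × ι) ℂ} (hM : ∀ V ∈ unitaryGroup ι ℂ, Commute (V ⊗ₖ V) M)
include hM

lemma pair_eq_pair_of_commute_kronecker {a b c d : ι} (h : M (a, b) (c, d) ≠ 0) :
    ({a, b} : Set ι) = {c, d} := by
  ext t
  set e : ι → ℂ := fun x => if x = t then Complex.I else 1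
  have he : diagonal e ∈ unitaryGroup ι ℂ :=
    diagonal_mem_unitaryGroup fun x => by by_cases hx : x = t <;> simp [e, hx]
  have hcomm := congrFun (congrFun (hM _ he) (a, b)) (c, d)
  rw [diagonal_kronecker_diagonal, diagonal_mul, mul_diagonal, mul_comm] at hcomm
  have heq : e a * e b = e c * e d := mul_left_cancel₀ h hcomm
  have := (phase_mul_phase_eq_one_iff t a b).symm.trans (heq ▸ phase_mul_phase_eq_one_iff t c d)
  simp only [Set.mem_insert_iff, Set.mem_singleton_iff]
  tauto

lemma apply_eq_zero_of_commute_kronecker {a b c d : ι}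
    (h : ¬((c = a ∧ d = b) ∨ (c = b ∧ d = a))) : M (a, b) (c, d) = 0 := by
  by_contra hne
  have := pair_eq_pair_of_commute_kronecker hM hne
  rw [Set.pair_eq_pair_iff] at this
  tauto

lemma apply_prodCongr_of_commute_kronecker (σ : Equiv.Perm ι) (p q : ι × ι) :
    M (σ.prodCongr σ p) (σ.prodCongr σ q) = M p q := by
  have h := hM _ (permMatrix_mem_unitaryGroup σ)
  rw [permMatrix_kronecker_permMatrix, Commute, SemiconjBy, PEquiv.toMatrix_toPEquiv_mul,
    PEquiv.mul_toMatrix_toPEquiv] at h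
  simpa [Equiv.prodCongr_symm, Prod.map_map] using congrFun (congrFun h p) (σ.prodCongr σ q)

lemma apply_eq_apply_of_commute_kronecker {a b c d : ι} (hab : a ≠ b) (hcd : c ≠ d) :
    M (c, d) (c, d) = M (a, b) (a, b) ∧ M (c, d) (d, c) = M (a, b) (b, a) := by
  obtain ⟨σ, hσa, hσb⟩ :=
    MulAction.is_two_pretransitive_iff.mp (Equiv.Perm.isMultiplyPretransitive ι 2) hab hcd
  rw [Equiv.Perm.smul_def] at hσa hσb
  constructor
  · simpa [hσa, hσb] using apply_prodCongr_of_commute_kronecker hM σ (a, b) (a, b)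
  · simpa [hσa, hσb] using apply_prodCongr_of_commute_kronecker hM σ (a, b) (b, a)

lemma apply_diag_eq_of_commute_kronecker (a c : ι) : M (c, c) (c, c) = M (a, a) (a, a) := by
  simpa using apply_prodCongr_of_commute_kronecker hM (Equiv.swap a c) (a, a) (a, a)

lemma eq_add_smul_diagonal_of_commute_kronecker {a b : ι} (hab : a ≠ b) :
    M = M (a, b) (a, b) • 1 + M (a, b) (b, a) • swapMatrix ι ℂ
      + (M (a, a) (a, a) - M (a, b) (a, b) - M (a, b) (b, a)) •
        diagonal (fun p : ι × ι => if p.1 = p.2 then 1 else 0) := by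
  ext ⟨x, y⟩ ⟨z, w⟩
  simp only [Matrix.add_apply, Matrix.smul_apply, one_apply, swapMatrix_apply, diagonal_apply,
    Prod.ext_iff, Prod.swap_prod_mk, smul_eq_mul]
  by_cases hxy : x = y
  · subst hxy
    by_cases h : z = x ∧ w = x
    · obtain ⟨rfl, rfl⟩ := h
      simp [apply_diag_eq_of_commute_kronecker hM a]
    · rw [apply_eq_zero_of_commute_kronecker hM (by tauto)]
      simp only [if_neg (show ¬(x = z ∧ x = w) by tauto), if_neg (show ¬(z = x ∧ w = x) by tauto)]
      simp
  · have hvals := apply_eq_apply_of_commute_kronecker hM hab hxy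
    by_cases h1 : z = x ∧ w = y
    · obtain ⟨rfl, rfl⟩ := h1
      simp [hvals.1, hxy, Ne.symm hxy]
    by_cases h2 : z = y ∧ w = x
    · obtain ⟨rfl, rfl⟩ := h2
      simp [hvals.2, hxy, Ne.symm hxy]
    rw [apply_eq_zero_of_commute_kronecker hM (by tauto)]
    simp only [if_neg (show ¬(x = z ∧ y = w) by tauto), if_neg (show ¬(z = y ∧ w = x) by tauto)]
    simp

theorem exists_eq_smul_one_add_smul_swapMatrix_of_commute_kronecker [Nontrivial ι] :
    ∃ β γ : ℂ, M = β • 1 + γ • swapMatrix ι ℂ := by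
  obtain ⟨a, b, hab⟩ := exists_pair_ne ι
  have hM_eq := eq_add_smul_diagonal_of_commute_kronecker hM hab
  obtain ⟨V, hV, hVab⟩ := exists_mem_unitaryGroup_apply_mul_apply_ne_zero hab
  have hc : M (a, a) (a, a) - M (a, b) (a, b) - M (a, b) (b, a) = 0 := by
    refine eq_zero_of_commute_smul_diagonal hab hVab ?_
    rw [eq_sub_of_add_eq' hM_eq.symm]
    exact (hM V hV).sub_right (((Commute.one_right _).smul_right _).add_right
      ((commute_kronecker_swapMatrix V).smul_right _))
  exact ⟨_, _, by rwa [hc, zero_smul, add_zero] at hM_eq⟩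

end Commutant

section EntrywiseIntegral

variable {α : Type*} [MeasurableSpace α] {μ : Measure α} {l m m' n : Type*}
  [Fintype m] [Fintype m']

lemma mul_of_integral_mul_apply (A : Matrix l m ℂ) (B : Matrix m' n ℂ) {g : α → Matrix m m' ℂ}
    (hg : ∀ i j, Integrable (fun x => g x i j) μ) (p : l) (q : n) :
    (A * of (fun i j => ∫ x, g x i j ∂μ) * B) p q = ∫ x, (A * g x * B) p q ∂μ := by
  simp only [mul_apply, of_apply, Finset.sum_mul]
  rw [integral_finsetSum _ fun j _ => integrable_finsetSum _ fun i _ =>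
    ((hg i j).const_mul _).mul_const _]
  refine Finset.sum_congr rfl fun j _ => ?_
  rw [integral_finsetSum _ fun i _ => ((hg i j).const_mul _).mul_const _]
  exact Finset.sum_congr rfl fun i _ => by rw [integral_mul_const, integral_const_mul]

lemma trace_mul_of_integral (P : Matrix m' m ℂ) {g : α → Matrix m m' ℂ}
    (hg : ∀ i j, Integrable (fun x => g x i j) μ) :
    trace (P * of (fun i j => ∫ x, g x i j ∂μ)) = ∫ x, trace (P * g x) ∂μ := by
  simp only [trace, diag_apply, mul_apply, of_apply]
  rw [integral_finsetSum _ fun i _ => integrable_finsetSum _ fun j _ => (hg j i).const_mul (P i j)]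
  refine Finset.sum_congr rfl fun i _ => ?_
  rw [integral_finsetSum _ fun j _ => (hg j i).const_mul (P i j)]
  exact Finset.sum_congr rfl fun j _ => (integral_const_mul _ _).symm

end EntrywiseIntegral

lemma norm_mul_mul_apply_le {l m m' n : Type*} [Fintype m] [Fintype m']
    {A : Matrix l m ℂ} {B : Matrix m' n ℂ} (hA : ∀ i j, ‖A i j‖ ≤ 1) (hB : ∀ i j, ‖B i j‖ ≤ 1)
    (X : Matrix m m' ℂ) (p : l) (q : n) :
    ‖(A * X * B) p q‖ ≤ ∑ i, ∑ j, ‖X i j‖ := by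
  simp only [mul_apply, Finset.sum_mul]
  rw [Finset.sum_comm]
  refine (norm_sum_le _ _).trans (Finset.sum_le_sum fun i _ => ?_)
  refine (norm_sum_le _ _).trans (Finset.sum_le_sum fun j _ => ?_)
  rw [norm_mul, norm_mul]
  calc ‖A p i‖ * ‖X i j‖ * ‖B j q‖ ≤ 1 * ‖X i j‖ * 1 := by gcongr <;> simp [hA, hB]
    _ = ‖X i j‖ := by ring

section WernerTwirl

variable {ι : Type*} [Fintype ι] [DecidableEq ι]
  [MeasurableSpace (unitaryGroup ι ℂ)] (μ : Measure (unitaryGroup ι ℂ))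

noncomputable def wernerTwirl (X : Matrix (ι × ι) (ι × ι) ℂ) : Matrix (ι × ι) (ι × ι) ℂ :=
  of fun p q => ∫ U : unitaryGroup ι ℂ,
    (((U : Matrix ι ι ℂ) ⊗ₖ (U : Matrix ι ι ℂ)) * X * ((U : Matrix ι ι ℂ) ⊗ₖ (U : Matrix ι ι ℂ))ᴴ)
      p q ∂μ

variable [BorelSpace (unitaryGroup ι ℂ)] [IsFiniteMeasure μ]

lemma integrable_kronecker_mul_mul_conjTranspose_apply (X : Matrix (ι × ι) (ι × ι) ℂ)
    (p q : ι × ι) :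
    Integrable (fun U : unitaryGroup ι ℂ => (((U : Matrix ι ι ℂ) ⊗ₖ (U : Matrix ι ι ℂ)) * X *
      ((U : Matrix ι ι ℂ) ⊗ₖ (U : Matrix ι ι ℂ))ᴴ) p q) μ := by
  have hkron : Continuous fun U : unitaryGroup ι ℂ => (U : Matrix ι ι ℂ) ⊗ₖ (U : Matrix ι ι ℂ) :=
    continuous_matrix fun i j =>
      (continuous_subtype_val.matrix_elem i.1 j.1).mul (continuous_subtype_val.matrix_elem i.2 j.2)
  refine Integrable.of_bound
    (((hkron.matrix_mul continuous_const).matrix_mul hkron.matrix_conjTranspose).matrix_elem p q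
      ).aestronglyMeasurable (∑ i, ∑ j, ‖X i j‖) (Filter.Eventually.of_forall fun U => ?_)
  have hU := entry_norm_bound_of_unitary (kronecker_mem_unitary U.2 U.2)
  exact norm_mul_mul_apply_le hU (fun i j => by simpa using hU j i) X p q

lemma commute_kronecker_wernerTwirl [μ.IsMulLeftInvariant] (X : Matrix (ι × ι) (ι × ι) ℂ)
    {V : Matrix ι ι ℂ} (hV : V ∈ unitaryGroup ι ℂ) : Commute (V ⊗ₖ V) (wernerTwirl μ X) := by
  refine commute_of_mul_mul_conjTranspose_eq (kronecker_mem_unitary hV hV) ?_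
  ext p q
  rw [wernerTwirl,
    mul_of_integral_mul_apply _ _ (integrable_kronecker_mul_mul_conjTranspose_apply μ X) p q,
    of_apply]
  have hmul (U : unitaryGroup ι ℂ) :
      V ⊗ₖ V * ((U ⊗ₖ U : Matrix (ι × ι) (ι × ι) ℂ) * X * (U ⊗ₖ U : Matrix (ι × ι) (ι × ι) ℂ)ᴴ)
        * (V ⊗ₖ V)ᴴ = (((⟨V, hV⟩ * U : unitaryGroup ι ℂ) : Matrix ι ι ℂ) ⊗ₖ
          ((⟨V, hV⟩ * U : unitaryGroup ι ℂ) : Matrix ι ι ℂ)) * X *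
          (((⟨V, hV⟩ * U : unitaryGroup ι ℂ) : Matrix ι ι ℂ) ⊗ₖ
          ((⟨V, hV⟩ * U : unitaryGroup ι ℂ) : Matrix ι ι ℂ))ᴴ := by
    rw [Submonoid.coe_mul, mul_kronecker_mul, conjTranspose_mul]
    simp only [Matrix.mul_assoc]
  simp_rw [hmul]
  exact integral_mul_left_eq_self (fun U : unitaryGroup ι ℂ =>
    (((U : Matrix ι ι ℂ) ⊗ₖ (U : Matrix ι ι ℂ)) * X * ((U : Matrix ι ι ℂ) ⊗ₖ (U : Matrix ι ι ℂ))ᴴ)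
      p q) ⟨V, hV⟩

lemma trace_mul_wernerTwirl [IsProbabilityMeasure μ] (X : Matrix (ι × ι) (ι × ι) ℂ)
    {P : Matrix (ι × ι) (ι × ι) ℂ} (hP : ∀ U ∈ unitaryGroup ι ℂ, Commute (U ⊗ₖ U) P) :
    trace (P * wernerTwirl μ X) = trace (P * X) := by
  rw [wernerTwirl,
    trace_mul_of_integral _ (integrable_kronecker_mul_mul_conjTranspose_apply μ X)]
  have hconj (U : unitaryGroup ι ℂ) :
      trace (P * ((U ⊗ₖ U : Matrix (ι × ι) (ι × ι) ℂ) * X * (U ⊗ₖ U : Matrix (ι × ι) (ι × ι) ℂ)ᴴ))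
        = trace (P * X) := by
    set B : Matrix (ι × ι) (ι × ι) ℂ := U ⊗ₖ U
    have hBB : Bᴴ * B = 1 := mem_unitaryGroup_iff'.mp (kronecker_mem_unitary U.2 U.2)
    calc trace (P * (B * X * Bᴴ)) = trace (B * (P * X * Bᴴ)) := by
          rw [← Matrix.mul_assoc, ← Matrix.mul_assoc, ← (hP U U.2).eq]
          simp only [B, Matrix.mul_assoc]
      _ = trace (P * X * (Bᴴ * B)) := by rw [trace_mul_comm, Matrix.mul_assoc]
      _ = trace (P * X) := by rw [hBB, Matrix.mul_one]
  simp [hconj]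

end WernerTwirl

/-- The Werner twirling channel `X ↦ ∫ (U⊗U)X(U⊗U)ᴴ dμ(U)` equals
`X ↦ (2/(n(n+1)))·⟨P0,X⟩·P0 + (2/(n(n−1)))·⟨P1,X⟩·P1`, where `P0, P1` are the
projections onto the symmetric and antisymmetric subspaces. -/
theorem stmt_17 (n : ℕ) (hn : 2 ≤ n)
    [MeasurableSpace (Matrix.unitaryGroup (Fin n) ℂ)]
    [BorelSpace (Matrix.unitaryGroup (Fin n) ℂ)]
    (μ : Measure (Matrix.unitaryGroup (Fin n) ℂ))
    [μ.IsHaarMeasure] [IsProbabilityMeasure μ]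
    (W : Matrix (Fin n × Fin n) (Fin n × Fin n) ℂ)
    (hW : W = ∑ j : Fin n, ∑ k : Fin n,
      Matrix.single j k (1 : ℂ) ⊗ₖ Matrix.single k j (1 : ℂ))
    (P0 P1 : Matrix (Fin n × Fin n) (Fin n × Fin n) ℂ)
    (hP0 : P0 = ((1 : ℂ) / 2) • (1 + W))
    (hP1 : P1 = ((1 : ℂ) / 2) • (1 - W)) :
    ∀ (X : Matrix (Fin n × Fin n) (Fin n × Fin n) ℂ) (i j : Fin n × Fin n),
      (∫ U : Matrix.unitaryGroup (Fin n) ℂ,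
        (((U : Matrix (Fin n) (Fin n) ℂ) ⊗ₖ (U : Matrix (Fin n) (Fin n) ℂ)) * X *
          ((U : Matrix (Fin n) (Fin n) ℂ) ⊗ₖ (U : Matrix (Fin n) (Fin n) ℂ))ᴴ) i j ∂μ) =
      ((2 / ((n : ℂ) * ((n : ℂ) + 1)) * Matrix.trace (P0ᴴ * X)) • P0 +
       (2 / ((n : ℂ) * ((n : ℂ) - 1)) * Matrix.trace (P1ᴴ * X)) • P1) i j := by
  intro X i j
  rw [sum_single_kronecker_single] at hW
  subst hW
  have hP0' : P0 = symmProj (Fin n) := hP0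
  have hP1' : P1 = antisymmProj (Fin n) := hP1
  subst hP0' hP1'
  have : Nontrivial (Fin n) := Fin.nontrivial_iff_two_le.mpr hn
  obtain ⟨β, γ, hβγ⟩ := exists_eq_smul_one_add_smul_swapMatrix_of_commute_kronecker
    fun V hV => commute_kronecker_wernerTwirl μ X hV
  have hdecomp := eq_trace_mul_symmProj_smul_add_trace_mul_antisymmProj_smul
    (by simpa using hn) hβγ
  rw [trace_mul_wernerTwirl μ X fun U _ => commute_kronecker_symmProj U,
    trace_mul_wernerTwirl μ X fun U _ => commute_kronecker_antisymmProj U,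
    Fintype.card_fin] at hdecomp
  rw [conjTranspose_symmProj, conjTranspose_antisymmProj, ← hdecomp]
  rfl
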